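/- Let (q₁,q₂,q₃,q₄,q₅) = (1,1,1,-1,-3). For every A ∈ SU(5) there exists h ∈ Sp2 such that Σ_{ℓ=1}^5 (|(Ah)_{ℓ2}|² + |(Ah)_{ℓ4}|²) q_ℓ ≥ 0. -/

import Mathlib

open Finset

noncomputable section

/-- SU(5): 5×5 special unitary complex matrices. -/
def SU5 : Set (Matrix (Fin 5) (Fin 5) ℂ) :=
  {A | A * A.conjTranspose = 1 ∧ A.det = 1}

/-- The image of the embedding Sp(2) ↪ SU(5). -/
def Sp2 : Set (Matrix (Fin 5) (Fin 5) ℂ) :=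
  {h | h ∈ SU5 ∧
    (∀ i : Fin 5, h i 4 = if i = 4 then 1 else 0) ∧
    (∀ i : Fin 5, h 4 i = if i = 4 then 1 else 0) ∧
    (∀ i j : Fin 5, i < 2 → j < 2 →
      h (i + 2) (j + 2) = (starRingEnd ℂ) (h i j) ∧
      h (i + 2) j = -(starRingEnd ℂ) (h i (j + 2)))}

/-!
Let `v` be the last row of `A`. The last row of every `h ∈ Sp2` is `e₄`, so the last row of
`A * h` is `v ᵥ* h`. An element of `Sp(1) × Sp(1) ⊂ Sp(2)` followed by one of `SU(2) ⊂ Sp(2)`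
moves `v` into the span of `e₀` and `e₄` (indices from `0`), which gives
`(A * h) 4 1 = (A * h) 4 3 = 0`. For the unitary `B = A * h` the weighted sum is then
`2 - 2 (‖B 3 1‖² + ‖B 3 3‖²) ≥ 0`, because columns `1`, `3` and row `3` of `B` are unit vectors.
-/

open Matrix ComplexConjugate

theorem mem_SU5_iff {A : Matrix (Fin 5) (Fin 5) ℂ} :
    A ∈ SU5 ↔ A ∈ specialUnitaryGroup (Fin 5) ℂ := by
  rw [mem_specialUnitaryGroup_iff, mem_unitaryGroup_iff]; rfl

theorem entries_of_mem_Sp2 {h : Matrix (Fin 5) (Fin 5) ℂ} (hh : h ∈ Sp2) :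
    h 2 2 = conj (h 0 0) ∧ h 2 3 = conj (h 0 1) ∧ h 3 2 = conj (h 1 0) ∧ h 3 3 = conj (h 1 1) ∧
    h 2 0 = -conj (h 0 2) ∧ h 2 1 = -conj (h 0 3) ∧ h 3 0 = -conj (h 1 2) ∧
    h 3 1 = -conj (h 1 3) ∧ h 4 0 = 0 ∧ h 4 1 = 0 ∧ h 4 2 = 0 ∧ h 4 3 = 0 := by
  obtain ⟨-, -, hrow, hq⟩ := hh
  obtain ⟨h00, h00'⟩ := hq 0 0 (by decide) (by decide)
  obtain ⟨h01, h01'⟩ := hq 0 1 (by decide) (by decide)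
  obtain ⟨h10, h10'⟩ := hq 1 0 (by decide) (by decide)
  obtain ⟨h11, h11'⟩ := hq 1 1 (by decide) (by decide)
  exact ⟨h00, h01, h10, h11, h00', h01', h10', h11', hrow 0, hrow 1, hrow 2, hrow 3⟩

theorem mul_mem_Sp2 {g h : Matrix (Fin 5) (Fin 5) ℂ} (hg : g ∈ Sp2) (hh : h ∈ Sp2) :
    g * h ∈ Sp2 := by
  obtain ⟨g22, g23, g32, g33, g20, g21, g30, g31, -⟩ := entries_of_mem_Sp2 hg
  obtain ⟨h22, h23, h32, h33, h20, h21, h30, h31, h40, h41, h42, h43⟩ := entries_of_mem_Sp2 hh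
  obtain ⟨gSU, gcol, grow, -⟩ := hg
  obtain ⟨hSU, hcol, hrow, -⟩ := hh
  refine ⟨mem_SU5_iff.2 (Submonoid.mul_mem _ (mem_SU5_iff.1 gSU) (mem_SU5_iff.1 hSU)),
    fun i => ?_, fun i => ?_, fun i j hi hj => ?_⟩
  · simp [mul_apply, hcol, gcol]
  · simp [mul_apply, hrow, grow]
  · obtain rfl | rfl : i = 0 ∨ i = 1 := by omega
    all_goals obtain rfl | rfl : j = 0 ∨ j = 1 := by omega
    all_goals
      simp only [Fin.isValue, Fin.reduceAdd, mul_apply, Fin.sum_univ_five, g22, g23, g32, g33, g20,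
        g21, g30, g31, h22, h23, h32, h33, h20, h21, h30, h31, h40, h41, h42, h43, mul_zero,
        add_zero, map_add, map_mul, map_neg, Complex.conj_conj]
      constructor <;> ring

-- `(a, b)` and `(c, d)` are unit quaternions acting on the quaternionic coordinates `(0, 2)` and
-- `(1, 3)` of `ℍ² = ℂ⁴`.
def sp1Sp1 (a b c d : ℂ) : Matrix (Fin 5) (Fin 5) ℂ :=
  !![a, 0, -conj b, 0, 0;
     0, c, 0, -conj d, 0;
     b, 0, conj a, 0, 0;
     0, d, 0, conj c, 0;
     0, 0, 0, 0, 1]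

-- `diag(P, conj P, 1)` for `P = !![a, -conj b; b, conj a]`.
def su2 (a b : ℂ) : Matrix (Fin 5) (Fin 5) ℂ :=
  !![a, -conj b, 0, 0, 0;
     b, conj a, 0, 0, 0;
     0, 0, conj a, -b, 0;
     0, 0, conj b, a, 0;
     0, 0, 0, 0, 1]

theorem conj_mul_add_conj_mul_eq_one {a b : ℂ} (hab : Complex.normSq a + Complex.normSq b = 1) :
    conj a * a + conj b * b = 1 := by
  simp only [← Complex.normSq_eq_conj_mul_self]; exact_mod_cast hab

theorem sp1Sp1_mem_Sp2 {a b c d : ℂ} (hab : Complex.normSq a + Complex.normSq b = 1)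
    (hcd : Complex.normSq c + Complex.normSq d = 1) : sp1Sp1 a b c d ∈ Sp2 := by
  have hab' := conj_mul_add_conj_mul_eq_one hab
  have hcd' := conj_mul_add_conj_mul_eq_one hcd
  refine ⟨⟨?_, ?_⟩, fun i => ?_, fun i => ?_, fun i j hi hj => ?_⟩
  · ext i j
    fin_cases i <;> fin_cases j <;> simp [sp1Sp1, mul_apply, Fin.sum_univ_five] <;>
      first | ring1 | linear_combination hab' | linear_combination hcd'
  · simp [sp1Sp1, Matrix.det_succ_row_zero, Fin.sum_univ_succ, Fin.succAbove]
    linear_combination (conj c * c + conj d * d) * hab' + hcd'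
  · fin_cases i <;> rfl
  · fin_cases i <;> rfl
  · fin_cases i <;> fin_cases j <;> simp at hi hj <;> simp [sp1Sp1]

theorem su2_mem_Sp2 {a b : ℂ} (hab : Complex.normSq a + Complex.normSq b = 1) :
    su2 a b ∈ Sp2 := by
  have hab' := conj_mul_add_conj_mul_eq_one hab
  refine ⟨⟨?_, ?_⟩, fun i => ?_, fun i => ?_, fun i j hi hj => ?_⟩
  · ext i j
    fin_cases i <;> fin_cases j <;> simp [su2, mul_apply, Fin.sum_univ_five] <;>
      first | ring1 | linear_combination hab'
  · simp [su2, Matrix.det_succ_row_zero, Fin.sum_univ_succ, Fin.succAbove]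
    linear_combination (conj a * a + conj b * b + 1) * hab'
  · fin_cases i <;> rfl
  · fin_cases i <;> rfl
  · fin_cases i <;> fin_cases j <;> simp at hi hj <;> simp [su2]

theorem vecMul_sp1Sp1 (v : Fin 5 → ℂ) (a b c d : ℂ) :
    v ᵥ* sp1Sp1 a b c d = ![v 0 * a + v 2 * b, v 1 * c + v 3 * d,
      v 2 * conj a - v 0 * conj b, v 3 * conj c - v 1 * conj d, v 4] := by
  ext j
  fin_cases j <;> simp [sp1Sp1, vecMul, dotProduct, Fin.sum_univ_five] <;> ring

theorem vecMul_su2 (v : Fin 5 → ℂ) (a b : ℂ) :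
    v ᵥ* su2 a b = ![v 0 * a + v 1 * b, v 1 * conj a - v 0 * conj b,
      v 2 * conj a + v 3 * conj b, v 3 * a - v 2 * b, v 4] := by
  ext j
  fin_cases j <;> simp [su2, vecMul, dotProduct, Fin.sum_univ_five] <;> ring

theorem exists_normSq_add_normSq_eq_one_and_mul_conj_eq (x y : ℂ) :
    ∃ a b : ℂ, Complex.normSq a + Complex.normSq b = 1 ∧ y * conj a = x * conj b := by
  by_cases hxy : x = 0 ∧ y = 0
  · exact ⟨1, 0, by simp, by simp [hxy.1, hxy.2]⟩
  have hpos : 0 < Complex.normSq x + Complex.normSq y := by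
    rcases not_and_or.1 hxy with hx | hy
    · linarith [Complex.normSq_pos.2 hx, Complex.normSq_nonneg y]
    · linarith [Complex.normSq_pos.2 hy, Complex.normSq_nonneg x]
  set r := √(Complex.normSq x + Complex.normSq y)
  have hr : r ^ 2 = Complex.normSq x + Complex.normSq y := Real.sq_sqrt hpos.le
  refine ⟨conj x / r, conj y / r, ?_, ?_⟩
  · simp only [Complex.normSq_div, Complex.normSq_conj, Complex.normSq_ofReal, ← sq, hr]
    field_simp
  · simp only [map_div₀, Complex.conj_conj, Complex.conj_ofReal]
    ring

theorem Matrix.sum_norm_sq_row_eq_one {𝕜 n : Type*} [RCLike 𝕜] [Fintype n] [DecidableEq n]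
    {U : Matrix n n 𝕜} (hU : U ∈ unitaryGroup n 𝕜) (i : n) : ∑ j, ‖U i j‖ ^ 2 = 1 := by
  have hii := congrFun (congrFun (mem_unitaryGroup_iff.1 hU) i) i
  simp only [mul_apply, star_eq_conjTranspose, conjTranspose_apply, ← starRingEnd_apply,
    RCLike.mul_conj, one_apply_eq] at hii
  exact_mod_cast hii

theorem Matrix.sum_norm_sq_col_eq_one {𝕜 n : Type*} [RCLike 𝕜] [Fintype n] [DecidableEq n]
    {U : Matrix n n 𝕜} (hU : U ∈ unitaryGroup n 𝕜) (j : n) : ∑ i, ‖U i j‖ ^ 2 = 1 := by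
  simpa [star_eq_conjTranspose] using sum_norm_sq_row_eq_one (Unitary.star_mem hU) j

theorem weighted_sum_nonneg_of_mem_unitaryGroup {B : Matrix (Fin 5) (Fin 5) ℂ}
    (hB : B ∈ unitaryGroup (Fin 5) ℂ) (h41 : B 4 1 = 0) (h43 : B 4 3 = 0) :
    ∑ ℓ : Fin 5, (‖B ℓ 1‖ ^ 2 + ‖B ℓ 3‖ ^ 2) *
      (((![1, 1, 1, -1, -3] : Fin 5 → ℤ) ℓ : ℤ) : ℝ) ≥ 0 := by
  have col1 := sum_norm_sq_col_eq_one hB 1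
  have col3 := sum_norm_sq_col_eq_one hB 3
  have row3 := sum_norm_sq_row_eq_one hB 3
  simp only [Fin.sum_univ_five, h41, h43, norm_zero, Matrix.cons_val, Int.cast_one, Int.cast_neg,
    Int.cast_ofNat] at col1 col3 row3 ⊢
  linarith [sq_nonneg ‖B 3 0‖, sq_nonneg ‖B 3 2‖, sq_nonneg ‖B 3 4‖]

theorem exists_mem_Sp2_vecMul_eq_zero (v : Fin 5 → ℂ) :
    ∃ h ∈ Sp2, (v ᵥ* h) 1 = 0 ∧ (v ᵥ* h) 3 = 0 := by
  obtain ⟨a, b, hab, h02⟩ := exists_normSq_add_normSq_eq_one_and_mul_conj_eq (v 0) (v 2)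
  obtain ⟨c, d, hcd, h13⟩ := exists_normSq_add_normSq_eq_one_and_mul_conj_eq (v 1) (v 3)
  set w := v ᵥ* sp1Sp1 a b c d with hw
  obtain ⟨a', b', hab', h01⟩ := exists_normSq_add_normSq_eq_one_and_mul_conj_eq (w 0) (w 1)
  have hw2 : w 2 = 0 := by simp [hw, vecMul_sp1Sp1, h02]
  have hw3 : w 3 = 0 := by simp [hw, vecMul_sp1Sp1, h13]
  refine ⟨sp1Sp1 a b c d * su2 a' b', mul_mem_Sp2 (sp1Sp1_mem_Sp2 hab hcd) (su2_mem_Sp2 hab'),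
    ?_, ?_⟩
  · simp [← vecMul_vecMul, ← hw, vecMul_su2, h01]
  · simp [← vecMul_vecMul, ← hw, vecMul_su2, hw2, hw3]

theorem stmt5 (A : Matrix (Fin 5) (Fin 5) ℂ) (hA : A ∈ SU5) :
    ∃ h ∈ Sp2,
      ∑ ℓ : Fin 5, (‖(A * h) ℓ 1‖ ^ 2 + ‖(A * h) ℓ 3‖ ^ 2) *
        (((![1, 1, 1, -1, -3] : Fin 5 → ℤ) ℓ : ℤ) : ℝ) ≥ 0 := by
  obtain ⟨h, hh, h1, h3⟩ := exists_mem_Sp2_vecMul_eq_zero (A 4)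
  have hAh : A * h ∈ unitaryGroup (Fin 5) ℂ :=
    specialUnitaryGroup_le_unitaryGroup (mul_mem (mem_SU5_iff.1 hA) (mem_SU5_iff.1 hh.1))
  exact ⟨h, hh, weighted_sum_nonneg_of_mem_unitaryGroup hAh h1 h3⟩
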